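/- Let $i : M \to N$ be an immersion of connected smooth manifolds. Then the isotropy group $\mathrm{Diff}_i(M) = \{f \in \mathrm{Diff}(M) : i \circ f = i\}$ acts freely on $M$: no non-identity element of $\mathrm{Diff}_i(M)$ has a fixed point. -/

import Mathlib

open Function Set
open scoped Manifold Topology

/-!
An immersion is locally injective: in charts its derivative is injective, hence anti-Lipschitz,
and a map that is `c`-close to it with `c` small is still anti-Lipschitz near the point. If moreover
`M` is Hausdorff, `f` and `id` are two continuous lifts of `i` through the locally injective,
separated map `i`, so the set where they agree is clopen; it is nonempty as soon as `f` has a fixed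
point, hence it is all of the connected manifold `M`.
-/

theorem ApproximatesLinearOn.injOn_of_antilipschitzWith
    {𝕜 : Type*} [NontriviallyNormedField 𝕜]
    {E : Type*} [NormedAddCommGroup E] [NormedSpace 𝕜 E]
    {F : Type*} [NormedAddCommGroup F] [NormedSpace 𝕜 F]
    {f : E → F} {f' : E →L[𝕜] F} {s : Set E} {c K : NNReal}
    (hf : ApproximatesLinearOn f f' s c) (hf' : AntilipschitzWith K f') (hc : c < K⁻¹) :
    InjOn f s := by
  have h := ((hf'.domRestrict s).add_lipschitzWith hf.lipschitz_sub hc).injective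
  replace h : Injective fun x : s ↦ f x := by simpa [Set.domRestrict] using h
  exact injOn_iff_injective.2 h

theorem HasStrictFDerivAt.exists_mem_nhds_injOn
    {𝕜 : Type*} [NontriviallyNormedField 𝕜] [CompleteSpace 𝕜]
    {E : Type*} [NormedAddCommGroup E] [NormedSpace 𝕜 E] [FiniteDimensional 𝕜 E]
    {F : Type*} [NormedAddCommGroup F] [NormedSpace 𝕜 F]
    {f : E → F} {f' : E →L[𝕜] F} {a : E}
    (hf : HasStrictFDerivAt f f' a) (hf' : Injective f') :
    ∃ s ∈ 𝓝 a, InjOn f s := by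
  obtain ⟨K, hK, hf'K⟩ := (f' : E →ₗ[𝕜] F).exists_antilipschitzWith (LinearMap.ker_eq_bot.2 hf')
  obtain ⟨s, hs, happrox⟩ := hf.approximates_deriv_on_nhds (c := K⁻¹ / 2) (Or.inr (by positivity))
  exact ⟨s, hs, happrox.injOn_of_antilipschitzWith hf'K (NNReal.half_lt_self (by positivity))⟩

theorem ContMDiffAt.exists_mem_nhds_injOn_of_injective_mfderiv
    {𝕜 : Type*} [RCLike 𝕜]
    {E : Type*} [NormedAddCommGroup E] [NormedSpace 𝕜 E] [FiniteDimensional 𝕜 E]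
    {H : Type*} [TopologicalSpace H] {I : ModelWithCorners 𝕜 E H} [I.Boundaryless]
    {M : Type*} [TopologicalSpace M] [ChartedSpace H M]
    {E' : Type*} [NormedAddCommGroup E'] [NormedSpace 𝕜 E']
    {H' : Type*} [TopologicalSpace H'] {J : ModelWithCorners 𝕜 E' H'}
    {N : Type*} [TopologicalSpace N] [ChartedSpace H' N]
    {n : WithTop ℕ∞} {f : M → N} {x : M} (hf : ContMDiffAt I J n f x) (hn : n ≠ 0)
    (hf' : Injective (mfderiv I J f x)) :
    ∃ U ∈ 𝓝 x, InjOn f U := by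
  set e := extChartAt I x
  set g := writtenInExtChartAt I J x f
  have hg : ContDiffAt 𝕜 n g (e x) := by
    have h := (contMDiffAt_iff.1 hf).2
    rwa [I.range_eq_univ, contDiffWithinAt_univ] at h
  have hg' : mfderiv I J f x = fderiv 𝕜 g (e x) := by
    rw [(hf.mdifferentiableAt hn).mfderiv, I.range_eq_univ, fderivWithin_univ]
  obtain ⟨s, hs, hg_inj⟩ := (hg.hasStrictFDerivAt hn).exists_mem_nhds_injOn (hg' ▸ hf')
  have hge : EqOn (g ∘ e) (extChartAt J (f x) ∘ f) e.source := fun y hy ↦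
    congrArg (extChartAt J (f x) ∘ f) (e.left_inv hy)
  refine ⟨e.source ∩ e ⁻¹' s, Filter.inter_mem (extChartAt_source_mem_nhds x)
    ((continuousAt_extChartAt x).preimage_mem_nhds hs), ?_⟩
  exact ((hg_inj.comp (e.injOn.mono inter_subset_left) fun y hy ↦ hy.2).congr
    (hge.mono inter_subset_left)).of_comp

theorem stmt_12_general
    {E : Type*} [NormedAddCommGroup E] [NormedSpace ℝ E] [FiniteDimensional ℝ E]
    {H : Type*} [TopologicalSpace H] {I : ModelWithCorners ℝ E H}
    {M : Type*} [TopologicalSpace M] [ChartedSpace H M]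
    [T2Space M] [ConnectedSpace M] [I.Boundaryless]
    {E' : Type*} [NormedAddCommGroup E'] [NormedSpace ℝ E']
    {H' : Type*} [TopologicalSpace H'] {J : ModelWithCorners ℝ E' H'}
    {N : Type*} [TopologicalSpace N] [ChartedSpace H' N]
    (i : M → N) (hi : ContMDiff I J (⊤ : ℕ∞) i)
    (himm : ∀ x : M, Function.Injective (mfderiv I J i x)) :
    ∀ f : Diffeomorph I I M M (⊤ : ℕ∞), (∀ x, i (f x) = i x) → (∃ x, f x = x) → ∀ x, f x = x := by
  rintro f hf ⟨x₀, hx₀⟩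
  have hi_loc : IsLocallyInjective i := isLocallyInjective_iff_nhds.2 fun x ↦
    (hi x).exists_mem_nhds_injOn_of_injective_mfderiv (by simp) (himm x)
  exact congr_fun <|
    (T2Space.isSeparatedMap i).eq_of_comp_eq hi_loc f.continuous continuous_id (funext hf) x₀ hx₀

/-- The isotropy group `Diff_i(M) = {f : i ∘ f = i}` of an immersion of
connected manifolds acts freely on `M`: an element with a fixed point is the identity. -/
theorem stmt_12
    {E : Type*} [NormedAddCommGroup E] [NormedSpace ℝ E] [FiniteDimensional ℝ E]
    {H : Type*} [TopologicalSpace H] {I : ModelWithCorners ℝ E H}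
    {M : Type*} [TopologicalSpace M] [ChartedSpace H M] [IsManifold I (⊤ : ℕ∞) M]
    [T2Space M] [SecondCountableTopology M] [ConnectedSpace M] [I.Boundaryless]
    {E' : Type*} [NormedAddCommGroup E'] [NormedSpace ℝ E'] [FiniteDimensional ℝ E']
    {H' : Type*} [TopologicalSpace H'] {J : ModelWithCorners ℝ E' H'}
    {N : Type*} [TopologicalSpace N] [ChartedSpace H' N] [IsManifold J (⊤ : ℕ∞) N]
    [T2Space N] [SecondCountableTopology N] [ConnectedSpace N] [J.Boundaryless]
    (hdim : Module.finrank ℝ E ≤ Module.finrank ℝ E')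
    (i : M → N) (hi : ContMDiff I J (⊤ : ℕ∞) i)
    (himm : ∀ x : M, Function.Injective (mfderiv I J i x)) :
    ∀ f : Diffeomorph I I M M (⊤ : ℕ∞), (∀ x, i (f x) = i x) → (∃ x, f x = x) → ∀ x, f x = x :=
  stmt_12_general i hi himm
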